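/- arXiv:2405.17812 — 2 statements merged into one kernel-verified Lean document; each statement's English description precedes it below -/
import Mathlib

section
/- Let k | n. If the maximal pair 𝒜 = ⟨A,0⟩ is immediately followed by the maximal pair ℬ = ⟨B,0⟩ in the ≻-decreasing list of all maximal pairs of Σ^n × Z_k, then A is a prefix of the concatenation red(A)·red(B) of their reductions. -/
/-- Right rotation by `i` of a pair in `Σ^n × ℤ/k`. -/
def rotPair (s k : ℕ) (i : ℕ) (P : List (Fin s) × ZMod k) : List (Fin s) × ZMod k :=
  (P.1.rotate i, P.2 + (i : ZMod k))

/-- The order ≻ : `P ≻ Q` iff (same second component and `P.1 > Q.1` lexicographically)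
or `(k-1-P.2) > (k-1-Q.2)`, i.e. `P.2 < Q.2` as residues. -/
def succPair (s k : ℕ) (P Q : List (Fin s) × ZMod k) : Prop :=
  (List.Lex (· < ·) Q.1 P.1 ∧ P.2 = Q.2) ∨ P.2.val < Q.2.val

/-- A pair is maximal when no rotation of it is ≻-greater than it. -/
def isMaxPair (s k : ℕ) (P : List (Fin s) × ZMod k) : Prop :=
  ∀ i : ℕ, ¬ succPair s k (rotPair s k i P) P

/-- Length of the reduction of a word: the least `p` with `k ∣ p`, `p ∣ |A|`
and `A = (A.take p)^{|A|/p}`. -/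
noncomputable def reduceLen (s k : ℕ) (A : List (Fin s)) : ℕ :=
  sInf {p : ℕ | k ∣ p ∧ p ∣ A.length ∧
    A = (List.replicate (A.length / p) (A.take p)).flatten}

/-- The reduction of a word. -/
noncomputable def reduceWord (s k : ℕ) (A : List (Fin s)) : List (Fin s) := A.take (reduceLen s k A)

/-! Let `p = |red(A)|` and assume `p < n`, so `A` consists of at least two copies of `red(A)`.
Let `d` be the first position where `B` and `A` differ. Lowering the letter of `A` at the copy of
position `d` in the last block gives a word `C < A` that is still maximal among its `k`-rotations:
a rotation of `C` either fixes `A`, and then moves the lowered letter to an earlier position, or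
already decreases `A` before the last block. Since `B < C` whenever `d < n - p`, the hypothesis
that no maximal word lies strictly between `B` and `A` forces `A` and `B` to agree on their first
`n - p` letters. If `q = |red(B)|` were at most `n - p`, then `A` would be smaller than its
rotation by `q`; hence `q > n - p`, and `A = red(A) · A[p, n) = red(A) · B[0, n - p)` is a prefix
of `red(A) · red(B)`. -/

theorem Nat.add_le_of_dvd_of_lt {p r n : ℕ} (hr : p ∣ r) (hn : p ∣ n) (h : r < n) :
    r + p ≤ n := by
  obtain ⟨a, rfl⟩ := hr
  obtain ⟨b, rfl⟩ := hn
  calc p * a + p = p * (a + 1) := by ring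
    _ ≤ p * b := Nat.mul_le_mul_left _ (Nat.lt_of_mul_lt_mul_left h)

namespace List

variable {α : Type*}

theorem iterate_rotate_one (l : List α) (n : ℕ) :
    (fun l : List α => l.rotate 1)^[n] l = l.rotate n := by
  induction n with
  | zero => simp
  | succ n ih => rw [Function.iterate_succ_apply', ih, rotate_rotate]

theorem rotate_gcd_eq_self {l : List α} {a b : ℕ} (ha : l.rotate a = l) (hb : l.rotate b = l) :
    l.rotate (a.gcd b) = l := by
  have key : ∀ n, Function.IsPeriodicPt (fun l : List α => l.rotate 1) n l ↔ l.rotate n = l :=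
    fun n => by rw [Function.IsPeriodicPt, Function.IsFixedPt, iterate_rotate_one]
  exact (key _).1 (((key a).2 ha).gcd ((key b).2 hb))

theorem rotate_mul_eq_self {l : List α} {p : ℕ} (h : l.rotate p = l) (j : ℕ) :
    l.rotate (p * j) = l := by
  induction j with
  | zero => simp
  | succ j ih => rw [Nat.mul_succ, ← rotate_rotate, ih, h]

theorem getElem_rotate_of_rotate_eq_self {l : List α} {j : ℕ} (h : l.rotate j = l) (i : ℕ)
    (hi : i < l.length) : l[(i + j) % l.length]'(Nat.mod_lt _ (by omega)) = l[i] :=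
  (getElem_rotate l j i (by simpa)).symm.trans (getElem_of_eq h _)

theorem getElem_mod_of_rotate_eq_self {l : List α} {p : ℕ} (h : l.rotate p = l) (i : ℕ)
    (hi : i < l.length) : l[i % p]'((Nat.mod_le i p).trans_lt hi) = l[i] := by
  have := getElem_rotate_of_rotate_eq_self (rotate_mul_eq_self h (i / p)) (i % p)
    ((Nat.mod_le i p).trans_lt hi)
  simp only [Nat.mod_add_div, Nat.mod_eq_of_lt hi] at this
  exact this.symm

theorem take_mul_eq_flatten_replicate {l : List α} {p : ℕ} (h : l.rotate p = l) :
    ∀ j, p * j ≤ l.length → l.take (p * j) = (replicate j (l.take p)).flatten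
  | 0, _ => by simp
  | j + 1, hj => by
    rw [Nat.mul_succ] at hj
    have hdrop : (l.drop (p * j)).take p = l.take p := by
      conv_rhs => rw [← rotate_mul_eq_self h j, rotate_eq_drop_append_take (by omega)]
      rw [take_append_of_le_length (by simp; omega)]
    rw [Nat.mul_succ, take_add, take_mul_eq_flatten_replicate h j (by omega), hdrop,
      replicate_succ', flatten_append, flatten_singleton]

theorem rotate_length_flatten_replicate (T : List α) (m : ℕ) :
    (replicate m T).flatten.rotate T.length = (replicate m T).flatten := by
  cases m with
  | zero => simp
  | succ m =>
    rw [replicate_succ, flatten_cons, rotate_append_length_eq, ← flatten_cons, ← replicate_succ,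
      replicate_succ', flatten_append, flatten_singleton]

theorem eq_flatten_replicate_take_iff_rotate_eq_self {l : List α} {p : ℕ} (hp : p ∣ l.length) :
    l = (replicate (l.length / p) (l.take p)).flatten ↔ l.rotate p = l := by
  constructor
  · intro h
    rcases le_or_gt p l.length with hle | hlt
    · rw [h]
      simpa [length_take_of_le hle] using rotate_length_flatten_replicate (l.take p) (l.length / p)
    · simp [length_eq_zero_iff.1 (Nat.eq_zero_of_dvd_of_lt hp hlt)]
  · intro h
    conv_lhs => rw [← take_length (l := l), ← Nat.mul_div_cancel' hp]
    exact take_mul_eq_flatten_replicate h _ (Nat.mul_div_cancel' hp).le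

theorem eq_of_take_eq_of_rotate_eq_self {l₁ l₂ : List α} {p : ℕ} (hp : 0 < p)
    (hl : l₁.length = l₂.length) (h₁ : l₁.rotate p = l₁) (h₂ : l₂.rotate p = l₂)
    (h : l₁.take p = l₂.take p) : l₁ = l₂ := by
  refine ext_getElem hl fun i hi₁ hi₂ => ?_
  rw [← getElem_mod_of_rotate_eq_self h₁, ← getElem_mod_of_rotate_eq_self h₂]
  have := getElem_of_eq h (i := i % p)
    (by simpa using ⟨Nat.mod_lt _ hp, (Nat.mod_le _ _).trans_lt hi₁⟩)
  rwa [getElem_take, getElem_take] at this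

theorem drop_eq_take_of_rotate_eq_self {l : List α} {p : ℕ} (h : l.rotate p = l)
    (hp : p ≤ l.length) : l.drop p = l.take (l.length - p) := by
  have := congrArg (take (l.length - p)) (rotate_eq_drop_append_take hp)
  rw [h, take_left' (by simp)] at this
  exact this.symm

section LinearOrder

variable [LinearOrder α]

theorem exists_getElem_lt_of_lt {l₁ l₂ : List α} (h : l₁ < l₂) (hl : l₁.length = l₂.length) :
    ∃ (d : ℕ) (h₁ : d < l₁.length) (h₂ : d < l₂.length),
      (∀ i (hi : i < d), l₁[i] = l₂[i]) ∧ l₁[d] < l₂[d] := by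
  rcases List.lt_iff_exists.1 h with ⟨-, h'⟩ | h'
  · omega
  · exact h'

theorem lt_of_getElem_lt {l₁ l₂ : List α} (d : ℕ) (h₁ : d < l₁.length) (h₂ : d < l₂.length)
    (heq : ∀ i (hi : i < d), l₁[i] = l₂[i]) (hlt : l₁[d] < l₂[d]) : l₁ < l₂ :=
  List.lt_iff_exists.2 (.inr ⟨d, h₁, h₂, heq, hlt⟩)

theorem le_of_forall_getElem_le {l₁ l₂ : List α} (hl : l₁.length = l₂.length)
    (h : ∀ i (h₁ : i < l₁.length) (h₂ : i < l₂.length), l₁[i] ≤ l₂[i]) : l₁ ≤ l₂ :=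
  not_lt.1 fun hlt => by
    obtain ⟨d, h₂, h₁, -, hd⟩ := exists_getElem_lt_of_lt hlt hl.symm
    exact not_lt_of_ge (h d h₁ h₂) hd

def IsMaxRotation (k : ℕ) (A : List α) : Prop :=
  ∀ r, k ∣ r → A.rotate r ≤ A

theorem rotate_set_lt_of_rotate_eq_self {A : List α} {r e : ℕ} {v : α} (hAr : A.rotate r = A)
    (hr : 0 < r) (hre : r ≤ e) (he : e < A.length) (hv : v < A[e]) :
    (A.set e v).rotate r < A.set e v := by
  refine lt_of_getElem_lt (e - r) (by simp; omega) (by simp; omega) (fun i hi => ?_) ?_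
  · have h1 := getElem_rotate_of_rotate_eq_self hAr i (by omega)
    simp only [Nat.mod_eq_of_lt (show i + r < A.length by omega)] at h1
    simp only [getElem_rotate, length_set, Nat.mod_eq_of_lt (show i + r < A.length by omega),
      getElem_set_ne (show e ≠ i + r by omega), getElem_set_ne (show e ≠ i by omega), h1]
  · have h1 := getElem_rotate_of_rotate_eq_self hAr (e - r) (by omega)
    simp only [Nat.sub_add_cancel hre, Nat.mod_eq_of_lt he] at h1
    simp only [getElem_rotate, length_set, Nat.sub_add_cancel hre, Nat.mod_eq_of_lt he,
      getElem_set_self, getElem_set_ne (show e ≠ e - r by omega), ← h1]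
    exact hv

theorem rotate_set_lt_of_rotate_ne_self {A : List α} {p r e : ℕ} {v : α} (hA : A.rotate r ≤ A)
    (hAr : A.rotate r ≠ A) (hp : 0 < p) (hpA : A.rotate p = A) (h2p : p ≤ A.length - p)
    (hpe : A.length - p ≤ e) (he : e < A.length) (hv : v < A[e]) :
    (A.set e v).rotate r < A.set e v := by
  obtain ⟨d, hd₁, hd₂, hagree, hlt⟩ :=
    exists_getElem_lt_of_lt (lt_of_le_of_ne hA hAr) (length_rotate _ _)
  have hd : d < A.length - p := by
    by_contra! hd
    refine hAr (eq_of_take_eq_of_rotate_eq_self hp (length_rotate _ _)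
      (by rw [rotate_rotate, add_comm, ← rotate_rotate, hpA]) hpA ?_)
    refine ext_getElem (by simp) fun i h₁ h₂ => ?_
    simp only [getElem_take]
    exact hagree i (by simp at h₁; omega)
  calc (A.set e v).rotate r ≤ A.rotate r := le_of_forall_getElem_le (by simp) fun i _ _ => by
        simp only [getElem_rotate, length_set, getElem_set]
        split_ifs with h
        · simp only [h] at hv
          exact hv.le
        · exact le_rfl
    _ < A.set e v := lt_of_getElem_lt d (by simpa using hd₁) (by simp; omega)
        (fun i hi => by rw [getElem_set_ne (by omega)]; exact hagree i hi)
        (by rw [getElem_set_ne (by omega)]; exact hlt)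

theorem IsMaxRotation.set {k p e : ℕ} {A : List α} {v : α} (hA : IsMaxRotation k A)
    (hkn : k ∣ A.length) (hp : 0 < p) (hpn : p ∣ A.length) (hpl : p < A.length)
    (hpA : A.rotate p = A) (hpmin : ∀ r, k ∣ r → A.rotate r = A → p ∣ r)
    (hpe : A.length - p ≤ e) (he : e < A.length) (hv : v < A[e]) :
    IsMaxRotation k (A.set e v) := by
  intro r hkr
  rw [← rotate_mod, length_set]
  have hrn : r % A.length < A.length := Nat.mod_lt _ (by omega)
  have hkr' : k ∣ r % A.length := (Nat.dvd_mod_iff hkn).2 hkr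
  rcases Nat.eq_zero_or_pos (r % A.length) with h0 | h0
  · rw [h0, rotate_zero]
  by_cases hAr : A.rotate (r % A.length) = A
  · have := Nat.add_le_of_dvd_of_lt (hpmin _ hkr' hAr) hpn hrn
    exact (rotate_set_lt_of_rotate_eq_self hAr h0 (by omega) he hv).le
  · have := Nat.add_le_of_dvd_of_lt dvd_rfl hpn hpl
    exact (rotate_set_lt_of_rotate_ne_self (hA _ hkr') hAr hp hpA (by omega) hpe he hv).le

theorem lt_rotate_of_rotate_eq_self {A B : List α} {d j : ℕ} (hdA : d < A.length)
    (hdB : d < B.length) (hagree : ∀ i (hi : i < d), B[i] = A[i]) (hlt : B[d] < A[d])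
    (hB : B.rotate j = B) (hj : 0 < j) (hjd : j ≤ d) : A < A.rotate j := by
  refine lt_of_getElem_lt (d - j) (by omega) (by simp; omega) (fun i hi => ?_) ?_
  · have h1 := getElem_rotate_of_rotate_eq_self hB i (by omega)
    simp only [Nat.mod_eq_of_lt (show i + j < B.length by omega)] at h1
    simp only [getElem_rotate, Nat.mod_eq_of_lt (show i + j < A.length by omega)]
    rw [← hagree i (by omega), ← hagree (i + j) (by omega), h1]
  · have h1 := getElem_rotate_of_rotate_eq_self hB (d - j) (by omega)
    simp only [Nat.sub_add_cancel hjd, Nat.mod_eq_of_lt hdB] at h1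
    simp only [getElem_rotate, Nat.sub_add_cancel hjd, Nat.mod_eq_of_lt hdA]
    rw [← hagree (d - j) (by omega), ← h1]
    exact hlt

theorem length_sub_le_of_no_maxRotation_between {k p d : ℕ} {A B : List α}
    (hkn : k ∣ A.length) (hA : IsMaxRotation k A)
    (hnext : ∀ C : List α, C.length = A.length → IsMaxRotation k C → C < A → ¬ B < C)
    (hp : 0 < p) (hpn : p ∣ A.length) (hpl : p < A.length) (hpA : A.rotate p = A)
    (hpmin : ∀ r, k ∣ r → A.rotate r = A → p ∣ r) (hdA : d < A.length) (hdB : d < B.length)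
    (hagree : ∀ i (hi : i < d), B[i] = A[i]) (hlt : B[d] < A[d]) : A.length - p ≤ d := by
  by_contra! hdp
  have he : A.length - p + d % p < A.length := by
    have := Nat.mod_lt d hp
    omega
  have hmod : (A.length - p + d % p) % p = d % p := by
    simp [Nat.add_mod, Nat.mod_eq_zero_of_dvd (Nat.dvd_sub hpn dvd_rfl)]
  have hv : B[d] < A[A.length - p + d % p] := by
    rw [← getElem_mod_of_rotate_eq_self hpA _ he]
    simpa only [hmod, getElem_mod_of_rotate_eq_self hpA d hdA] using hlt
  refine hnext _ (length_set ..) (hA.set hkn hp hpn hpl hpA hpmin (by omega) he hv) ?_ ?_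
  · exact lt_of_getElem_lt (A.length - p + d % p) (by simpa) he
      (fun i hi => getElem_set_ne (by omega) ..) (by simpa using hv)
  · exact lt_of_getElem_lt d hdB (by simpa)
      (fun i hi => by rw [getElem_set_ne (by omega)]; exact hagree i hi)
      (by rw [getElem_set_ne (by omega)]; exact hlt)

theorem prefix_take_append_take_of_no_maxRotation_between {k p q : ℕ} {A B : List α}
    (hlen : B.length = A.length) (hkn : k ∣ A.length) (hA : IsMaxRotation k A) (hBA : B < A)
    (hnext : ∀ C : List α, C.length = A.length → IsMaxRotation k C → C < A → ¬ B < C)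
    (hp : 0 < p) (hpn : p ∣ A.length) (hpA : A.rotate p = A)
    (hpmin : ∀ r, k ∣ r → A.rotate r = A → p ∣ r)
    (hq : 0 < q) (hkq : k ∣ q) (hqB : B.rotate q = B) :
    A <+: A.take p ++ B.take q := by
  rcases le_or_gt A.length p with hpl | hpl
  · rw [take_of_length_le hpl]
    exact prefix_append _ _
  obtain ⟨d, hdB, hdA, hagree, hlt⟩ := exists_getElem_lt_of_lt hBA hlen
  have hdp :=
    length_sub_le_of_no_maxRotation_between hkn hA hnext hp hpn hpl hpA hpmin hdA hdB hagree hlt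
  have hqp : A.length - p < q := by
    by_contra! hqp
    exact not_lt.2 (hA q hkq) (lt_rotate_of_rotate_eq_self hdA hdB hagree hlt hqB hq (by omega))
  have htake : A.take (A.length - p) = B.take (A.length - p) := by
    refine ext_getElem (by simp; omega) fun i h₁ h₂ => ?_
    simp only [getElem_take]
    exact (hagree i (by simp at h₁; omega)).symm
  conv_lhs => rw [← take_append_drop p A, drop_eq_take_of_rotate_eq_self hpA hpl.le, htake]
  exact (prefix_append_right_inj _).2 (take_prefix_take_left hqp.le)

end LinearOrder

end List

section Pairs

variable {s k : ℕ}

theorem succPair_zero_iff {A B : List (Fin s)} : succPair s k (A, 0) (B, 0) ↔ B < A := by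
  simp [succPair]

theorem isMaxPair_zero_iff {A : List (Fin s)} :
    isMaxPair s k (A, 0) ↔ List.IsMaxRotation k A := by
  simp only [isMaxPair, succPair, rotPair, zero_add, ZMod.val_zero, Nat.not_lt_zero, or_false,
    not_and, ZMod.natCast_eq_zero_iff, List.IsMaxRotation]
  exact forall_congr' fun i =>
    ⟨fun h hk => not_lt.1 fun hlt => h hlt hk, fun h hlt hk => not_lt.2 (h hk) hlt⟩

theorem reduceLen_eq_sInf (A : List (Fin s)) :
    reduceLen s k A = sInf {p | k ∣ p ∧ p ∣ A.length ∧ A.rotate p = A} := by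
  unfold reduceLen
  congr 1
  ext p
  exact and_congr_right fun _ => and_congr_right List.eq_flatten_replicate_take_iff_rotate_eq_self

theorem reduceLen_spec {A : List (Fin s)} (hkn : k ∣ A.length) :
    k ∣ reduceLen s k A ∧ reduceLen s k A ∣ A.length ∧ A.rotate (reduceLen s k A) = A := by
  rw [reduceLen_eq_sInf]
  exact Nat.sInf_mem (s := {p | k ∣ p ∧ p ∣ A.length ∧ A.rotate p = A})
    ⟨A.length, hkn, dvd_rfl, List.rotate_length A⟩

theorem reduceLen_dvd {A : List (Fin s)} {r : ℕ} (hA : 0 < A.length) (hkn : k ∣ A.length)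
    (hkr : k ∣ r) (hr : A.rotate r = A) : reduceLen s k A ∣ r := by
  obtain ⟨hkp, hpn, hpA⟩ := reduceLen_spec hkn
  have hp : 0 < reduceLen s k A := Nat.pos_of_dvd_of_pos hpn hA
  have hle : reduceLen s k A ≤ r.gcd (reduceLen s k A) := by
    conv_lhs => rw [reduceLen_eq_sInf]
    exact Nat.sInf_le
      ⟨Nat.dvd_gcd hkr hkp, (Nat.gcd_dvd_right _ _).trans hpn, List.rotate_gcd_eq_self hr hpA⟩
  exact Nat.le_antisymm (Nat.gcd_le_right _ hp) hle ▸ Nat.gcd_dvd_left _ _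

end Pairs

theorem stmt13_general (s n k : ℕ) (hn : 0 < n) (hkn : k ∣ n)
    (A B : List (Fin s)) (hA : A.length = n) (hB : B.length = n)
    (hmaxA : isMaxPair s k (A, (0 : ZMod k)))
    (hAB : succPair s k (A, (0 : ZMod k)) (B, 0))
    (hnext : ¬ ∃ C : List (Fin s), C.length = n ∧ isMaxPair s k (C, (0 : ZMod k)) ∧
        succPair s k (A, (0 : ZMod k)) (C, 0) ∧ succPair s k (C, (0 : ZMod k)) (B, 0)) :
    A <+: reduceWord s k A ++ reduceWord s k B := by
  subst hA
  obtain ⟨-, hpn, hpA⟩ := reduceLen_spec (s := s) hkn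
  obtain ⟨hkq, hqn, hqB⟩ := reduceLen_spec (s := s) (hB ▸ hkn : k ∣ B.length)
  have hnext' : ∀ C : List (Fin s), C.length = A.length → List.IsMaxRotation k C → C < A →
      ¬ B < C := fun C hC hCmax hCA hBC => hnext
    ⟨C, hC, isMaxPair_zero_iff.2 hCmax, succPair_zero_iff.2 hCA, succPair_zero_iff.2 hBC⟩
  exact List.prefix_take_append_take_of_no_maxRotation_between hB hkn
    (isMaxPair_zero_iff.1 hmaxA) (succPair_zero_iff.1 hAB) hnext' (Nat.pos_of_dvd_of_pos hpn hn)
    hpn hpA (fun _ hkr hr => reduceLen_dvd hn hkn hkr hr)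
    (Nat.pos_of_dvd_of_pos hqn (hB ▸ hn)) hkq hqB

/-- If the maximal pair `⟨A,0⟩` is immediately followed by the maximal pair `⟨B,0⟩`
in the ≻-decreasing list of all maximal pairs of `Σ^n × ℤ/k` (with `k ∣ n`), then
`A` is a prefix of `red(A) ++ red(B)`. -/
theorem stmt13 (s n k : ℕ) (hs : 2 ≤ s) (hn : 0 < n) (hk : 0 < k) (hkn : k ∣ n)
    (A B : List (Fin s)) (hA : A.length = n) (hB : B.length = n)
    (hmaxA : isMaxPair s k (A, (0 : ZMod k)))
    (hmaxB : isMaxPair s k (B, (0 : ZMod k)))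
    (hAB : succPair s k (A, (0 : ZMod k)) (B, 0))
    (hnext : ¬ ∃ C : List (Fin s), C.length = n ∧ isMaxPair s k (C, (0 : ZMod k)) ∧
        succPair s k (A, (0 : ZMod k)) (C, 0) ∧ succPair s k (C, (0 : ZMod k)) (B, 0)) :
    A <+: reduceWord s k A ++ reduceWord s k B :=
  stmt13_general s n k hn hkn A B hA hB hmaxA hAB hnext
end

section
/- Let k | n, and let 𝒜 = ⟨(A_p)^{q+1}, 0⟩ be a maximal pair where A_p = red(A) is the reduction of A and q ≥ 1. If 𝒬 = ⟨A_{p−1}(a_p + 1) 0^{pq}, 0⟩ is a well-defined pair (i.e., a_p < s−1), then 𝒬 is maximal and θ(𝒬) = 𝒜. -/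
/-- The operator θ on words. -/
def thetaWord (s k : ℕ) (A : List (Fin s)) : List (Fin s) :=
  let n := A.length
  let i := n - (A.reverse.takeWhile (fun a => a.val == 0)).length
  match A[i - 1]? with
  | none => A
  | some a =>
      let j := i + ((n - i) % k)
      let q := n / j
      (List.replicate q (A.take (i-1) ++
          (⟨a.val - 1, Nat.lt_of_le_of_lt (Nat.sub_le _ _) a.isLt⟩ : Fin s) ::
          List.replicate (j - i)
            (⟨s - 1, Nat.sub_lt (Nat.lt_of_le_of_lt (Nat.zero_le a.val) a.isLt) Nat.one_pos⟩ : Fin s))).flatten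
        ++ A.take (n - q * j)

/-- The operator θ on pairs with second component 0. -/
def thetaPair (s k : ℕ) (P : List (Fin s) × ZMod k) : List (Fin s) × ZMod k :=
  (thetaWord s k P.1, 0)

/-!
Write `P = W a`, `A = P^(q+1)` and `B = W (a+1) 0^(pq)`. The rotation of `A` by `j ≤ p` is the
`(q+1)`-st power of the rotation of `P` by `j`, so maximality of `A` makes `P` dominate its
rotations by multiples of `k`. The domination is strict for `0 < j < p`: a rotation fixing `P`
would, together with the period `p`, give the period `gcd j p < p`, hence a shorter reduction.

A rotation of `B` by `j ≥ p` starts inside the block of zeros, so it loses to `B`, whose first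
`p` letters are not all zero. For `0 < j < p`, look at the first difference of `rot_j P < P`.
Inside `W`, the same difference separates `rot_j B` from `B`. At the last letter, `a+1` either
still wins or ties, and after a tie the zeros of `rot_j B` lose to the rest of `W (a+1)`. Later
than that it cannot lie, because then `rot_(p-j) P > P`.

`θ(B)` is a direct computation: the last nonzero letter of `B` is at position `p` and `k ∣ pq`,
so `θ` lowers `a+1` back to `a` and repeats `W a` exactly `q+1` times.
-/

namespace List

variable {α : Type*}

theorem append_lt_append_iff_of_length_eq [LinearOrder α] {u v x y : List α}
    (h : u.length = v.length) : u ++ x < v ++ y ↔ u < v ∨ u = v ∧ x < y := by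
  induction u generalizing v with
  | nil =>
    obtain rfl := length_eq_zero_iff.mp h.symm
    simp
  | cons a u ih =>
    obtain _ | ⟨b, v⟩ := v
    · simp at h
    simp only [cons_append, cons_lt_cons_iff, ih (Nat.succ_injective h), cons.injEq]
    tauto

theorem append_singleton_ne_replicate {l : List α} {b c : α} (h : c ≠ b) :
    l ++ [c] ≠ replicate (l ++ [c]).length b := fun hl =>
  h (eq_of_mem_replicate (hl ▸ mem_append_right l (mem_singleton_self c)))

theorem exists_eq_replicate_append_cons_of_ne_replicate {b : α} :
    ∀ {l : List α}, l ≠ replicate l.length b →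
      ∃ i x l', l = replicate i b ++ x :: l' ∧ x ≠ b
  | [], h => absurd rfl h
  | x :: l, h => by
    by_cases hx : x = b
    · subst hx
      obtain ⟨i, y, l', rfl, hy⟩ :=
        exists_eq_replicate_append_cons_of_ne_replicate fun hl =>
          h (by rw [length_cons, replicate_succ, ← hl])
      exact ⟨i + 1, y, l', rfl, hy⟩
    · exact ⟨0, x, l, rfl, hx⟩

section Bottom

variable [LinearOrder α] {b : α}

theorem replicate_lt_of_ne_replicate (hb : ∀ x, b ≤ x) {l : List α}
    (h : l ≠ replicate l.length b) : replicate l.length b < l := by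
  obtain ⟨i, x, l', rfl, hx⟩ := exists_eq_replicate_append_cons_of_ne_replicate h
  rw [length_append, length_cons, length_replicate, ← replicate_append_replicate,
    replicate_succ]
  exact append_left_lt (cons_lt_cons_iff.mpr (Or.inl (lt_of_le_of_ne (hb x) (Ne.symm hx))))

theorem replicate_append_lt_append_replicate (hb : ∀ x, b ≤ x) {l : List α} {e : ℕ}
    (he : 0 < e) (h : l ≠ replicate l.length b) :
    replicate e b ++ l < l ++ replicate e b := by
  obtain ⟨i, x, l', rfl, hx⟩ := exists_eq_replicate_append_cons_of_ne_replicate h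
  obtain ⟨e, rfl⟩ := Nat.exists_eq_add_of_lt he
  rw [← append_assoc, replicate_append_replicate, Nat.add_comm, ← replicate_append_replicate,
    append_assoc, append_assoc, zero_add, replicate_succ, cons_append, cons_append]
  exact append_left_lt (cons_lt_cons_iff.mpr (Or.inl (lt_of_le_of_ne (hb x) (Ne.symm hx))))

end Bottom

theorem eq_flatten_replicate_of_append_comm {t : List α} :
    ∀ {m : ℕ} {l : List α}, l ++ t = t ++ l → l.length = m * t.length →
      l = (replicate m t).flatten
  | 0, l, _, hl => by simpa using hl
  | m + 1, l, hcomm, hl => by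
    have hpre : t <+: l :=
      prefix_of_prefix_length_le (hcomm ▸ prefix_append t l) (prefix_append l t)
        (by rw [hl]; exact Nat.le_mul_of_pos_left _ m.succ_pos)
    obtain ⟨l', rfl⟩ := hpre
    have hcomm' : l' ++ t = t ++ l' := by simpa using hcomm
    rw [length_append, Nat.succ_mul] at hl
    rw [eq_flatten_replicate_of_append_comm (m := m) hcomm' (by omega), replicate_succ,
      flatten_cons]

theorem eq_flatten_replicate_take_of_rotate_eq {l : List α} {g : ℕ} (hrot : l.rotate g = l)
    (hg : g ∣ l.length) : l = (replicate (l.length / g) (l.take g)).flatten := by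
  rcases eq_or_ne l [] with rfl | hne
  · simp
  have hgl : g ≤ l.length := Nat.le_of_dvd (length_pos_iff.mpr hne) hg
  apply eq_flatten_replicate_of_append_comm
  · calc l ++ take g l = take g l ++ (drop g l ++ take g l) := by
          rw [← append_assoc, take_append_drop]
      _ = take g l ++ l := by rw [← rotate_eq_drop_append_take hgl, hrot]
  · rw [length_take_of_le hgl, Nat.div_mul_cancel hg]

theorem rotate_gcd_eq_self_s17 {l : List α} {i j : ℕ} (hi : l.rotate i = l) (hj : l.rotate j = l) :
    l.rotate (i.gcd j) = l := by
  have h := Function.IsPeriodicPt.gcd (f := fun l : List α => l.rotate 1) (m := i) (n := j)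
    (by rwa [Function.IsPeriodicPt, Function.IsFixedPt, iterate_rotate_one])
    (by rwa [Function.IsPeriodicPt, Function.IsFixedPt, iterate_rotate_one])
  rwa [Function.IsPeriodicPt, Function.IsFixedPt, iterate_rotate_one] at h

theorem flatten_replicate_append_comm (u v : List α) (m : ℕ) :
    (replicate m (u ++ v)).flatten ++ u = u ++ (replicate m (v ++ u)).flatten := by
  induction m with
  | zero => simp
  | succ m ih => simp [replicate_succ, ih]

theorem rotate_flatten_replicate {l : List α} {j : ℕ} (hj : j ≤ l.length) (m : ℕ) :
    (replicate m l).flatten.rotate j = (replicate m (l.rotate j)).flatten := by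
  obtain ⟨u, v, rfl, rfl⟩ : ∃ u v, l = u ++ v ∧ u.length = j :=
    ⟨take j l, drop j l, (take_append_drop j l).symm, length_take_of_le hj⟩
  cases m with
  | zero => simp
  | succ m =>
    rw [rotate_append_length_eq, replicate_succ, flatten_cons, append_assoc,
      rotate_append_length_eq, append_assoc, flatten_replicate_append_comm, replicate_succ,
      flatten_cons, append_assoc]

theorem flatten_replicate_flatten_replicate (t : List α) (m r : ℕ) :
    (replicate m (replicate r t).flatten).flatten = (replicate (m * r) t).flatten := by
  rw [← flatten_replicate_replicate, flatten_flatten, map_replicate]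

theorem rotate_le_of_flatten_replicate_rotate_le [LinearOrder α] {P : List α} {k m : ℕ}
    (hmax : ∀ i, k ∣ i →
      (replicate (m + 1) P).flatten.rotate i ≤ (replicate (m + 1) P).flatten)
    {j : ℕ} (hj : j ≤ P.length) (hkj : k ∣ j) : P.rotate j ≤ P := by
  have h := hmax j hkj
  rw [rotate_flatten_replicate hj, replicate_succ, replicate_succ, flatten_cons,
    flatten_cons] at h
  exact not_lt.mp fun hlt => not_lt.mpr h
    ((append_lt_append_iff_of_length_eq (length_rotate P j).symm).mpr (Or.inl hlt))

end List

open List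

section RaiseLast

variable {α : Type*} [LinearOrder α] {b : α}

theorem rotate_append_replicate_lt_of_length_le (hb : ∀ x, b ≤ x) {Q : List α}
    (hQ : Q ≠ replicate Q.length b) {r j : ℕ} (hj : Q.length ≤ j) (hjr : j < Q.length + r) :
    (Q ++ replicate r b).rotate j < Q ++ replicate r b := by
  obtain ⟨d, rfl⟩ := Nat.exists_eq_add_of_le hj
  obtain ⟨e, rfl⟩ := Nat.exists_eq_add_of_le (show d ≤ r by omega)
  have hlen : Q.length + d = (Q ++ replicate d b).length := by simp
  rw [← replicate_append_replicate, ← append_assoc, hlen, rotate_append_length_eq,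
    append_assoc, replicate_append_replicate, Nat.add_comm, ← replicate_append_replicate,
    ← append_assoc, ← append_assoc]
  exact (append_lt_append_iff_of_length_eq (by simp [Nat.add_comm])).mpr
    (Or.inl (replicate_append_lt_append_replicate hb (by omega) hQ))

theorem rotate_lt_of_raise_last {W : List α} {a c : α} (hb : ∀ x, b ≤ x) (hac : a < c)
    (hsucc : ∀ y, a < y → c ≤ y) {j r : ℕ} (hj0 : 0 < j) (hjW : j ≤ W.length)
    (hjr : j ≤ r)
    (hlt : (W ++ [a]).rotate j < W ++ [a])
    (hle : (W ++ [a]).rotate (W.length + 1 - j) ≤ W ++ [a]) :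
    (W ++ c :: replicate r b).rotate j < W ++ c :: replicate r b := by
  obtain ⟨U, V, rfl, rfl⟩ : ∃ U V, W = U ++ V ∧ U.length = j :=
    ⟨W.take j, W.drop j, (take_append_drop j W).symm, length_take_of_le hjW⟩
  obtain ⟨Y, y, Z, hYZ, hY⟩ : ∃ Y y Z, U ++ V = Y ++ y :: Z ∧ Y.length = V.length := by
    obtain ⟨y, Z, hZ⟩ := exists_cons_of_ne_nil
      (ne_nil_of_length_pos (show 0 < (drop V.length (U ++ V)).length by simp; omega))
    exact ⟨take V.length (U ++ V), y, Z, by rw [← hZ, take_append_drop],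
      length_take_of_le (by simp)⟩
  have hZ : Z.length + 1 = U.length := by
    have := congrArg length hYZ
    simp only [length_append, length_cons] at this
    omega
  replace hlt : V ++ a :: U < Y ++ y :: (Z ++ [a]) := by
    rw [append_assoc, rotate_append_length_eq, ← append_assoc, hYZ] at hlt
    simpa using hlt
  replace hle : (Z ++ [a]) ++ (Y ++ [y]) ≤ U ++ (V ++ [a]) := by
    have hP : U ++ V ++ [a] = (Y ++ [y]) ++ (Z ++ [a]) := by rw [hYZ]; simp
    have hlen : (U ++ V).length + 1 - U.length = (Y ++ [y]).length := by simp [hY]; omega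
    rw [hlen, hP, rotate_append_length_eq, ← hP] at hle
    simpa using hle
  have hrot :
      (U ++ V ++ c :: replicate r b).rotate U.length = V ++ c :: (replicate r b ++ U) := by
    rw [append_assoc, rotate_append_length_eq]; simp
  have hB : U ++ V ++ c :: replicate r b = Y ++ y :: (Z ++ c :: replicate r b) := by
    rw [hYZ]; simp
  rw [hrot, hB]
  rcases (append_lt_append_iff_of_length_eq hY.symm).mp hlt with hVY | ⟨rfl, hcons⟩
  · exact (append_lt_append_iff_of_length_eq hY.symm).mpr (Or.inl hVY)
  refine (append_lt_append_iff_of_length_eq rfl).mpr (Or.inr ⟨rfl, ?_⟩)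
  rcases cons_lt_cons_iff.mp hcons with hay | ⟨rfl, hUZ⟩
  · rcases (hsucc y hay).lt_or_eq with hcy | rfl
    · exact cons_lt_cons_iff.mpr (Or.inl hcy)
    refine cons_lt_cons_iff.mpr (Or.inr ⟨rfl, ?_⟩)
    obtain ⟨d, rfl⟩ := Nat.exists_eq_add_of_le hjr
    have hsplit : replicate (U.length + d) b ++ U
        = replicate (Z ++ [c]).length b ++ (replicate d b ++ U) := by
      rw [← append_assoc, replicate_append_replicate]; simp [hZ]
    rw [hsplit, show Z ++ c :: replicate (U.length + d) b
      = (Z ++ [c]) ++ replicate (U.length + d) b by simp]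
    exact (append_lt_append_iff_of_length_eq length_replicate).mpr
      (Or.inl (replicate_lt_of_ne_replicate hb
        (append_singleton_ne_replicate ((hb a).trans_lt hac).ne')))
  · exact absurd hle (not_le.mpr ((append_lt_append_iff_of_length_eq
      (show U.length = (Z ++ [a]).length by simp [hZ])).mpr (Or.inl hUZ)))

theorem rotate_le_of_raise_last {W : List α} {a c : α} (hb : ∀ x, b ≤ x) (hac : a < c)
    (hsucc : ∀ y, a < y → c ≤ y) {k r : ℕ} (hkW : k ∣ W.length + 1) (hkr : k ∣ r)
    (hWr : W.length ≤ r)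
    (hle : ∀ j ≤ W.length + 1, k ∣ j → (W ++ [a]).rotate j ≤ W ++ [a])
    (hne : ∀ j, 0 < j → j < W.length + 1 → k ∣ j → (W ++ [a]).rotate j ≠ W ++ [a])
    (i : ℕ) (hki : k ∣ i) : (W ++ c :: replicate r b).rotate i ≤ W ++ c :: replicate r b := by
  have hlen : (W ++ c :: replicate r b).length = W.length + 1 + r := by simp; omega
  rw [← rotate_mod, hlen]
  have hkj : k ∣ i % (W.length + 1 + r) := (Nat.dvd_mod_iff (dvd_add hkW hkr)).mpr hki
  have hjn : i % (W.length + 1 + r) < W.length + 1 + r := Nat.mod_lt _ (by omega)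
  set j := i % (W.length + 1 + r)
  rcases Nat.eq_zero_or_pos j with hj0 | hj0
  · rw [hj0, rotate_zero]
  rcases lt_or_ge j (W.length + 1) with hjW | hjW
  · exact (rotate_lt_of_raise_last hb hac hsucc hj0 (by omega) (by omega)
      ((hle j hjW.le hkj).lt_of_ne (hne j hj0 hjW hkj))
      (hle _ (Nat.sub_le _ _) (Nat.dvd_sub hkW hkj))).le
  · have := rotate_append_replicate_lt_of_length_le hb
      (append_singleton_ne_replicate ((hb a).trans_lt hac).ne') (r := r) (j := j)
      (by simpa using hjW) (by simpa using hjn)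
    simpa using this.le

end RaiseLast

theorem isMaxPair_zero_iff_s17 {s k : ℕ} {L : List (Fin s)} :
    isMaxPair s k (L, 0) ↔ ∀ i, k ∣ i → L.rotate i ≤ L := by
  simp only [isMaxPair, succPair, rotPair, zero_add, ZMod.val_zero, Nat.not_lt_zero, or_false,
    ZMod.natCast_eq_zero_iff, not_and]
  exact forall_congr' fun i => ⟨fun h hki => not_lt.mp fun hlt => h hlt hki,
    fun h hlt hki => not_lt.mpr (h hki) hlt⟩

section Reduction

variable {s k : ℕ}

theorem reduceLen_le {A : List (Fin s)} {g : ℕ} (hkg : k ∣ g) (hg : g ∣ A.length)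
    (hA : A = (replicate (A.length / g) (A.take g)).flatten) : reduceLen s k A ≤ g :=
  Nat.sInf_le ⟨hkg, hg, hA⟩

theorem dvd_reduceLen {A : List (Fin s)} (h : 0 < reduceLen s k A) : k ∣ reduceLen s k A :=
  (Nat.sInf_mem (Nat.nonempty_of_pos_sInf h)).1

theorem reduceLen_flatten_replicate_le {P : List (Fin s)} {g : ℕ} (hkg : k ∣ g)
    (hg : g ∣ P.length) (hrot : P.rotate g = P) (m : ℕ) :
    reduceLen s k (replicate (m + 1) P).flatten ≤ g := by
  rcases eq_or_ne P [] with rfl | hP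
  · exact reduceLen_le hkg (by simp) (by simp)
  have hgP : g ≤ P.length := Nat.le_of_dvd (length_pos_iff.mpr hP) hg
  have htake : ((replicate (m + 1) P).flatten).take g = P.take g := by
    rw [replicate_succ, flatten_cons, take_append_of_le_length hgP]
  refine reduceLen_le hkg (by simpa using Dvd.dvd.mul_left hg _) ?_
  have hlen : ((replicate (m + 1) P).flatten).length / g = (m + 1) * (P.length / g) := by
    simp [Nat.mul_div_assoc _ hg]
  rw [htake, hlen, ← flatten_replicate_flatten_replicate,
    ← eq_flatten_replicate_take_of_rotate_eq hrot hg]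

theorem rotate_ne_self_of_length_eq_reduceLen {P : List (Fin s)} {m j : ℕ}
    (hP : P.length = reduceLen s k (replicate (m + 1) P).flatten)
    (hj0 : 0 < j) (hjP : j < P.length) (hkj : k ∣ j) : P.rotate j ≠ P := by
  intro hrot
  have hkP : k ∣ P.length := hP ▸ dvd_reduceLen (hP ▸ hj0.trans hjP)
  have hred := reduceLen_flatten_replicate_le (Nat.dvd_gcd hkj hkP) (Nat.gcd_dvd_right _ _)
    (rotate_gcd_eq_self_s17 hrot (rotate_length P)) m
  have := Nat.gcd_le_left P.length hj0
  omega

theorem reduceLen_eq_length_of_reduceWord_eq {P : List (Fin s)} {q : ℕ} (hP : 0 < P.length)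
    (hq : 1 ≤ q) (hred : reduceWord s k (replicate (q + 1) P).flatten = P) :
    reduceLen s k (replicate (q + 1) P).flatten = P.length := by
  have h := congrArg length hred
  simp only [reduceWord, length_take, length_flatten, map_replicate, sum_replicate,
    smul_eq_mul] at h
  have : P.length < (q + 1) * P.length := by nlinarith
  omega

end Reduction

theorem thetaWord_append_cons_replicate {s k : ℕ} {W : List (Fin s)} {a c z : Fin s}
    (hc : c.val = a.val + 1) (hz : z.val = 0) (hk : k ∣ W.length + 1) (q : ℕ) :
    thetaWord s k (W ++ c :: replicate ((W.length + 1) * q) z) =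
      (replicate (q + 1) (W ++ [a])).flatten := by
  have htail : (W ++ c :: replicate ((W.length + 1) * q) z).reverse.takeWhile
      (fun x => x.val == 0) = replicate ((W.length + 1) * q) z := by
    simp [hz, hc]
  have hlen : (W ++ c :: replicate ((W.length + 1) * q) z).length = (W.length + 1) * (q + 1) := by
    simp; ring
  have hi : (W.length + 1) * (q + 1) - (W.length + 1) * q = W.length + 1 := by
    rw [Nat.mul_succ, Nat.add_sub_cancel_left]
  have hj : ((W.length + 1) * (q + 1) - (W.length + 1)) % k = 0 := by
    rw [Nat.mul_succ, Nat.add_sub_cancel]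
    exact Nat.mod_eq_zero_of_dvd (hk.mul_right q)
  have hc' : (W ++ c :: replicate ((W.length + 1) * q) z)[W.length]? = some c := by simp
  have ha : (⟨c.val - 1, by omega⟩ : Fin s) = a := Fin.ext (by simp [hc])
  unfold thetaWord
  simp only [htail, hlen, length_replicate, hi, hc', hj, Nat.add_zero, Nat.sub_self,
    replicate_zero, Nat.mul_div_cancel_left _ W.length.succ_pos, Nat.add_sub_cancel,
    take_left]
  rw [Nat.mul_comm, Nat.sub_self, take_zero, append_nil, ha]

theorem stmt17 (s k : ℕ)
    (P : List (Fin s)) (p q : ℕ) (hp : P.length = p) (hq : 1 ≤ q)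
    (hred : reduceWord s k ((List.replicate (q + 1) P).flatten) = P)
    (hmax : isMaxPair s k ((List.replicate (q + 1) P).flatten, (0 : ZMod k)))
    (a : Fin s) (ha : P[p - 1]? = some a) (ha' : a.val < s - 1) :
    isMaxPair s k
      ((P.take (p - 1) ++ (⟨a.val + 1, by omega⟩ : Fin s) ::
          List.replicate (p * q) (⟨0, by omega⟩ : Fin s)), (0 : ZMod k)) ∧
    thetaPair s k
        ((P.take (p - 1) ++ (⟨a.val + 1, by omega⟩ : Fin s) ::
          List.replicate (p * q) (⟨0, by omega⟩ : Fin s)), (0 : ZMod k)) =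
      ((List.replicate (q + 1) P).flatten, 0) := by
  have hp0 : 0 < p := by
    obtain ⟨h, -⟩ := List.getElem?_eq_some_iff.mp ha
    omega
  have hPW : P = P.take (p - 1) ++ [a] := by
    calc P = P.take (p - 1 + 1) := by rw [Nat.sub_add_cancel hp0, ← hp, take_length]
      _ = _ := by rw [take_add_one, ha]; rfl
  set W := P.take (p - 1)
  have hW : W.length + 1 = p := by simp [W, hp]; omega
  have hr := reduceLen_eq_length_of_reduceWord_eq (by omega) hq hred
  have hkW : k ∣ W.length + 1 := by rw [hW, ← hp, ← hr]; exact dvd_reduceLen (by omega)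
  have hle : ∀ j ≤ W.length + 1, k ∣ j → (W ++ [a]).rotate j ≤ W ++ [a] := by
    rw [← hPW]
    exact fun j hj hkj => rotate_le_of_flatten_replicate_rotate_le
      (isMaxPair_zero_iff_s17.mp hmax) (by omega) hkj
  have hne :
      ∀ j, 0 < j → j < W.length + 1 → k ∣ j → (W ++ [a]).rotate j ≠ W ++ [a] := by
    rw [← hPW]
    exact fun j hj0 hjp hkj => rotate_ne_self_of_length_eq_reduceLen hr.symm hj0 (by omega) hkj
  rw [← hW]
  refine ⟨isMaxPair_zero_iff_s17.mpr (rotate_le_of_raise_last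
    (fun _ => Fin.le_def.mpr (Nat.zero_le _)) (Fin.lt_def.mpr a.val.lt_succ_self)
    (fun y hy => Fin.le_def.mpr hy) hkW (hkW.mul_right q) (by nlinarith) hle hne), ?_⟩
  rw [thetaPair, thetaWord_append_cons_replicate rfl rfl hkW, ← hPW]
end
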